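/- There exists a bijection Θ on Dyck paths of semilength n such that sups(P) = Umass(Θ(P)) + dr(Θ(P)) for every Dyck path P; consequently Σ_P q^{sups(P)} = Σ_P q^{Umass(P)+dr(P)} over Dyck_n. -/

import Mathlib

namespace MahonianStats

open Finset

/-- The value sequence of a permutation of `{1,…,n}`: position `i` (0-indexed)
carries the value `σ(i+1) ∈ {1,…,n}`; positions `≥ n` carry the junk value `0`. -/
def pf {n : ℕ} (σ : Equiv.Perm (Fin n)) : ℕ → ℕ :=
  fun i => if h : i < n then ((σ ⟨i, h⟩ : Fin n) : ℕ) + 1 else 0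

/-- The value sequence of a list (junk value `0` out of range). -/
def lf (l : List ℕ) : ℕ → ℕ := fun i => l.getD i 0

/-- Descent positions (0-indexed). -/
def desSet (n : ℕ) (f : ℕ → ℕ) : Finset ℕ :=
  (range (n - 1)).filter fun i => f (i + 1) < f i

def des (n : ℕ) (f : ℕ → ℕ) : ℕ := (desSet n f).card

/-- Major index: sum of (1-indexed) descent positions. -/
def maj (n : ℕ) (f : ℕ → ℕ) : ℕ := ∑ i ∈ desSet n f, (i + 1)

/-- Occurrences of the vincular pattern (1-32). -/
def p1_32 (n : ℕ) (f : ℕ → ℕ) : ℕ :=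
  ((range n ×ˢ range n).filter fun p =>
    p.1 < p.2 ∧ p.2 + 1 < n ∧ f p.1 < f (p.2 + 1) ∧ f (p.2 + 1) < f p.2).card

/-- Occurrences of the vincular pattern (31-2). -/
def p31_2 (n : ℕ) (f : ℕ → ℕ) : ℕ :=
  ((range n ×ˢ range n).filter fun p =>
    p.1 + 1 < p.2 ∧ f (p.1 + 1) < f p.2 ∧ f p.2 < f p.1).card

/-- Occurrences of the vincular pattern (32-1). -/
def p32_1 (n : ℕ) (f : ℕ → ℕ) : ℕ :=
  ((range n ×ˢ range n).filter fun p =>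
    p.1 + 1 < p.2 ∧ f p.2 < f (p.1 + 1) ∧ f (p.1 + 1) < f p.1).card

/-- Occurrences of the vincular pattern (21-3). -/
def p21_3 (n : ℕ) (f : ℕ → ℕ) : ℕ :=
  ((range n ×ˢ range n).filter fun p =>
    p.1 + 1 < p.2 ∧ f (p.1 + 1) < f p.1 ∧ f p.1 < f p.2).card

/-- Occurrences of the vincular pattern (3-21). -/
def p3_21 (n : ℕ) (f : ℕ → ℕ) : ℕ :=
  ((range n ×ˢ range n).filter fun p =>
    p.1 < p.2 ∧ p.2 + 1 < n ∧ f (p.2 + 1) < f p.2 ∧ f p.2 < f p.1).card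

/-- Occurrences of the vincular pattern (13-2). -/
def p13_2 (n : ℕ) (f : ℕ → ℕ) : ℕ :=
  ((range n ×ˢ range n).filter fun p =>
    p.1 + 1 < p.2 ∧ f p.1 < f p.2 ∧ f p.2 < f (p.1 + 1)).card

/-- Occurrences of the vincular pattern (2-13). -/
def p2_13 (n : ℕ) (f : ℕ → ℕ) : ℕ :=
  ((range n ×ˢ range n).filter fun p =>
    p.1 < p.2 ∧ p.2 + 1 < n ∧ f p.2 < f p.1 ∧ f p.1 < f (p.2 + 1)).card

/-- Occurrences of the vincular pattern (2-31). -/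
def p2_31 (n : ℕ) (f : ℕ → ℕ) : ℕ :=
  ((range n ×ˢ range n).filter fun p =>
    p.1 < p.2 ∧ p.2 + 1 < n ∧ f (p.2 + 1) < f p.1 ∧ f p.1 < f p.2).card

/-- Number of inversions. -/
def invp (n : ℕ) (f : ℕ → ℕ) : ℕ :=
  ((range n ×ˢ range n).filter fun p => p.1 < p.2 ∧ f p.2 < f p.1).card

def mak (n : ℕ) (f : ℕ → ℕ) : ℕ := p1_32 n f + p31_2 n f + p32_1 n f + des n f

def mad (n : ℕ) (f : ℕ → ℕ) : ℕ := 2 * p2_31 n f + p31_2 n f + des n f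

def Av123 (n : ℕ) (f : ℕ → ℕ) : Prop :=
  ¬ ∃ i j k, i < j ∧ j < k ∧ k < n ∧ f i < f j ∧ f j < f k
def Av132 (n : ℕ) (f : ℕ → ℕ) : Prop :=
  ¬ ∃ i j k, i < j ∧ j < k ∧ k < n ∧ f i < f k ∧ f k < f j
def Av213 (n : ℕ) (f : ℕ → ℕ) : Prop :=
  ¬ ∃ i j k, i < j ∧ j < k ∧ k < n ∧ f j < f i ∧ f i < f k
def Av231 (n : ℕ) (f : ℕ → ℕ) : Prop :=
  ¬ ∃ i j k, i < j ∧ j < k ∧ k < n ∧ f k < f i ∧ f i < f j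
def Av312 (n : ℕ) (f : ℕ → ℕ) : Prop :=
  ¬ ∃ i j k, i < j ∧ j < k ∧ k < n ∧ f j < f k ∧ f k < f i
def Av321 (n : ℕ) (f : ℕ → ℕ) : Prop :=
  ¬ ∃ i j k, i < j ∧ j < k ∧ k < n ∧ f k < f j ∧ f j < f i

/-- Number of up-steps among the first `k` steps. -/
def ups (P : List Bool) (k : ℕ) : ℕ := (P.take k).count true

/-- Number of down-steps among the first `k` steps. -/
def downs (P : List Bool) (k : ℕ) : ℕ := (P.take k).count false

/-- `P` is a Dyck word (`true` = up-step, `false` = down-step). -/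
def IsDyck (P : List Bool) : Prop :=
  P.count true = P.count false ∧ ∀ k, downs P k ≤ ups P k

/-- Dyck paths of semilength `n`. -/
def DyckN (n : ℕ) (P : List Bool) : Prop := IsDyck P ∧ P.length = 2 * n

/-- Height of the path before step `i` (0-indexed). -/
def hB (P : List Bool) (i : ℕ) : ℕ := ups P i - downs P i

/-- Number of double rises `UU`. -/
def dr (P : List Bool) : ℕ :=
  ((Finset.range P.length).filter fun i =>
    P.getD i false = true ∧ P.getD (i + 1) false = true).card

/-- `sups`: sum over up-steps of `⌈h/2⌉`, `h` the height of the step's lowest point. -/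
def sups (P : List Bool) : ℕ :=
  ∑ i ∈ (Finset.range P.length).filter (fun i => P.getD i false = true), (hB P i + 1) / 2

/-- `sdowns`: sum over down-steps of `⌊h/2⌋`, `h` the height of the step's lowest point. -/
def sdowns (P : List Bool) : ℕ :=
  ∑ i ∈ (Finset.range P.length).filter (fun i => P.getD i false = false), hB P (i + 1) / 2

/-- `spea`: sum over peaks `UD` of (height of apex − 1). -/
def spea (P : List Bool) : ℕ :=
  ∑ i ∈ (Finset.range P.length).filter
      (fun i => i + 1 < P.length ∧ P.getD i false = true ∧ P.getD (i + 1) false = false),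
    hB P i

/-- Index of the matching down-step of the up-step at index `i`:
the least `j > i` at which the path returns to the height it had before step `i`. -/
noncomputable def matchD (P : List Bool) (i : ℕ) : ℕ :=
  sInf {j | i < j ∧ ups P (j + 1) + downs P i = ups P i + downs P (j + 1)}

/-- The mass statistic summed over all up-steps: for a double rise `s_i s_{i+1} = UU`,
factor the suffix after `s_i` as `U P₁ D P₂ D` and take `|P₂|/2`; other up-steps get `0`. -/
noncomputable def Umass (P : List Bool) : ℕ :=
  ∑ i ∈ (Finset.range P.length).filter
      (fun i => P.getD i false = true ∧ P.getD (i + 1) false = true),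
    (matchD P i - matchD P (i + 1) - 1) / 2

/-- Start of the tunnel of the valley at step `v`: the greatest `i ≤ v` such that the
height before step `i` equals the height after step `v`. -/
noncomputable def tunnelStart (P : List Bool) (v : ℕ) : ℕ :=
  sSup {i | i ≤ v ∧ ups P i + downs P (v + 1) = ups P (v + 1) + downs P i}

/-- `stun`: sum over valleys `DU` of half the length of the corresponding tunnel. -/
noncomputable def stun (P : List Bool) : ℕ :=
  ∑ v ∈ (Finset.range P.length).filter
      (fun v => P.getD v false = false ∧ P.getD (v + 1) false = true),
    (v + 1 - tunnelStart P v) / 2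

/-!
Cutting a nonempty Dyck path at its first return, `P = U a D b`, identifies Dyck paths of
semilength `n` with binary trees with `n` nodes. Along this decomposition
  `sups (U a D b) = supsFloor a + |a|/2 + sups b`,  `supsFloor (U a D b) = sups a + supsFloor b`,
where `supsFloor` sums `⌊h/2⌋` over up-steps (each up-step of `a` is lifted by one). On the other
side, `Umass + dr` is additive over the factors `U a D` and `b`, and elevating `U a₁ D a₂` adds
`|a₂|/2 + 1`: the new root is a double rise of mass `|a₂|/2`. Hence the generating polynomials
`S, F, M, E` over paths of semilength `n` of `sups`, `supsFloor`, `Umass + dr` and `Umass + dr`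
of the elevated path satisfy `M n = S n` and `E n = q ^ n * F n`, by simultaneous induction on
`n`. Two statistics with the same fibre sizes on a finite set are carried into each other by a
bijection.
-/

lemma exists_equiv_forall_eq_of_ncard_eq {α : Type*} {p : α → Prop} (f g : α → ℕ)
    (hp : {x | p x}.Finite)
    (h : ∀ k, {x | p x ∧ f x = k}.ncard = {x | p x ∧ g x = k}.ncard) :
    ∃ e : {x // p x} ≃ {x // p x}, ∀ x, f x.1 = g (e x).1 := by
  have : Finite {x // p x} := hp
  have hfiber (k : ℕ) :
      Nonempty ({x : {x // p x} // f x.1 = k} ≃ {x : {x // p x} // g x.1 = k}) := by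
    rw [← Finite.card_eq, Nat.card_congr (Equiv.subtypeSubtypeEquivSubtypeInter p (f · = k)),
      Nat.card_congr (Equiv.subtypeSubtypeEquivSubtypeInter p (g · = k))]
    exact h k
  refine ⟨(Equiv.sigmaFiberEquiv _).symm.trans
    ((Equiv.sigmaCongrRight fun k => (hfiber k).some).trans (Equiv.sigmaFiberEquiv _)),
    fun x => ?_⟩
  exact ((hfiber (f x.1)).some ⟨x, rfl⟩).2.symm

section DyckPath

variable {a b P : List Bool} {i j k : ℕ}

@[simp] lemma ups_zero (P : List Bool) : ups P 0 = 0 := rfl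

@[simp] lemma downs_zero (P : List Bool) : downs P 0 = 0 := rfl

lemma ups_succ (P : List Bool) (k : ℕ) :
    ups P (k + 1) = ups P k + if P.getD k false = true then 1 else 0 := by
  rw [ups, ups, List.take_add_one, List.count_append]
  rcases lt_or_ge k P.length with hk | hk
  · rw [List.getElem?_eq_getElem hk, List.getD_eq_getElem _ _ hk]
    cases P[k] <;> simp
  · simp [List.getElem?_eq_none hk]

lemma ups_add_downs (P : List Bool) (k : ℕ) : ups P k + downs P k = min k P.length := by
  rw [ups, downs, List.count_true_add_count_false, List.length_take]

lemma exists_matchD_mem (hP : IsDyck P) (hi : P.getD i false = true) :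
    ∃ j < P.length, i < j ∧ ups P (j + 1) + downs P i = ups P i + downs P (j + 1) := by
  have hiP : i < P.length := by
    by_contra h
    rw [List.getD_eq_default _ _ (not_lt.1 h)] at hi
    exact Bool.false_ne_true hi
  have hend : ups P P.length + downs P i ≤ ups P i + downs P P.length := by
    have hups : ups P P.length = P.count true := by rw [ups, List.take_length]
    have hdowns : downs P P.length = P.count false := by rw [downs, List.take_length]
    have := hP.2 i
    have := hP.1
    omega
  have hQ : ∃ k, i < k ∧ ups P k + downs P i ≤ ups P i + downs P k :=
    ⟨P.length, hiP, hend⟩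
  classical
  -- At the least such `k` the path is exactly back at its height before step `i`: it is
  -- strictly higher at `k - 1 > i`, and a single step goes down by at most one.
  set k := Nat.find hQ
  obtain ⟨hik, hk⟩ : i < k ∧ ups P k + downs P i ≤ ups P i + downs P k := Nat.find_spec hQ
  have hkP : k ≤ P.length := Nat.find_min' hQ ⟨hiP, hend⟩
  have hsum := ups_add_downs P (k - 1)
  have hsum' := ups_add_downs P k
  have hsumi := ups_add_downs P i
  have hsumi' := ups_add_downs P (i + 1)
  have hupi := ups_succ P i
  rw [if_pos hi] at hupi
  have hki : i + 1 ≠ k := by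
    intro h
    rw [← h] at hk hsum'
    simp only [min_eq_left hiP.le, min_eq_left (Nat.succ_le_of_lt hiP)] at hsumi hsum' hsumi'
    omega
  have hprev : ¬ (i < k - 1 ∧ ups P (k - 1) + downs P i ≤ ups P i + downs P (k - 1)) :=
    Nat.find_min hQ (by omega)
  have hstep := ups_succ P (k - 1)
  rw [Nat.sub_add_cancel (by omega)] at hstep
  refine ⟨k - 1, by omega, by omega, ?_⟩
  rw [Nat.sub_add_cancel (by omega)]
  simp only [min_eq_left hkP, min_eq_left (show k - 1 ≤ P.length by omega)] at hsum hsum'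
  split_ifs at hstep <;> omega

lemma matchD_mem (hP : IsDyck P) (hi : P.getD i false = true) :
    matchD P i < P.length ∧ i < matchD P i ∧
      ups P (matchD P i + 1) + downs P i = ups P i + downs P (matchD P i + 1) := by
  obtain ⟨j, hjP, hj⟩ := exists_matchD_mem hP hi
  have hmem : matchD P i ∈
      {j | i < j ∧ ups P (j + 1) + downs P i = ups P i + downs P (j + 1)} :=
    Nat.sInf_mem ⟨j, hj⟩
  exact ⟨(Nat.sInf_le hj).trans_lt hjP, hmem⟩

lemma take_node_succ (hk : k ≤ a.length) :
    (true :: a ++ false :: b).take (k + 1) = true :: a.take k := by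
  rw [List.cons_append, List.take_succ_cons, List.take_append_of_le_length hk]

lemma take_node_length_add_two_add (j : ℕ) :
    (true :: a ++ false :: b).take (a.length + 2 + j) = true :: a ++ false :: b.take j := by
  rw [show true :: a ++ false :: b = (true :: a ++ [false]) ++ b by simp,
    show a.length + 2 + j = (true :: a ++ [false]).length + j by simp,
    List.take_length_add_append]
  simp

lemma ups_node_succ (hk : k ≤ a.length) :
    ups (true :: a ++ false :: b) (k + 1) = ups a k + 1 := by
  rw [ups, take_node_succ hk, List.count_cons_self, ups]

lemma downs_node_succ (hk : k ≤ a.length) :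
    downs (true :: a ++ false :: b) (k + 1) = downs a k := by
  rw [downs, take_node_succ hk, List.count_cons_of_ne (by decide), downs]

lemma ups_node_length_add_two_add (j : ℕ) :
    ups (true :: a ++ false :: b) (a.length + 2 + j) = a.count true + ups b j + 1 := by
  rw [ups, take_node_length_add_two_add j, ups]
  simp

lemma downs_node_length_add_two_add (j : ℕ) :
    downs (true :: a ++ false :: b) (a.length + 2 + j) = a.count false + downs b j + 1 := by
  rw [downs, take_node_length_add_two_add j, downs]
  simp only [List.cons_append, ne_eq, Bool.true_eq_false, not_false_eq_true,
    List.count_cons_of_ne, List.count_append, List.count_cons_self]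
  omega

lemma getD_node_succ (hk : k ≤ a.length) :
    (true :: a ++ false :: b).getD (k + 1) false = a.getD k false := by
  rcases hk.lt_or_eq with hk | rfl
  · rw [List.cons_append, List.getD_cons_succ, List.getD_append _ _ _ _ hk]
  · simp

lemma getD_node_length_add_two_add (j : ℕ) :
    (true :: a ++ false :: b).getD (a.length + 2 + j) false = b.getD j false := by
  rw [show a.length + 2 + j = (a.length + 1 + j) + 1 by omega, List.cons_append,
    List.getD_cons_succ, List.getD_append_right _ _ _ _ (by omega),
    show a.length + 1 + j - a.length = j + 1 by omega, List.getD_cons_succ]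

lemma hB_node_succ (ha : IsDyck a) (hk : k ≤ a.length) :
    hB (true :: a ++ false :: b) (k + 1) = hB a k + 1 := by
  have := ha.2 k
  rw [hB, hB, ups_node_succ hk, downs_node_succ hk]
  omega

lemma hB_node_length_add_two_add (ha : IsDyck a) (hb : IsDyck b) (j : ℕ) :
    hB (true :: a ++ false :: b) (a.length + 2 + j) = hB b j := by
  have := hb.2 j
  have := ha.1
  rw [hB, hB, ups_node_length_add_two_add, downs_node_length_add_two_add]
  omega

lemma sum_filter_range_node {M : Type*} [AddCommMonoid M] (p : ℕ → Prop)
    [DecidablePred p] (f : ℕ → M) :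
    ∑ i ∈ (range (true :: a ++ false :: b).length).filter p, f i =
      (if p 0 then f 0 else 0) + ∑ k ∈ range a.length, (if p (k + 1) then f (k + 1) else 0) +
        (if p (a.length + 1) then f (a.length + 1) else 0) +
        ∑ j ∈ range b.length, if p (a.length + 2 + j) then f (a.length + 2 + j) else 0 := by
  rw [sum_filter, show (true :: a ++ false :: b).length = a.length + 2 + b.length by
      simp only [List.cons_append, List.length_cons, List.length_append]; omega,
    sum_range_add, sum_range_succ, sum_range_succ', add_comm (∑ k ∈ range a.length, _)]

lemma card_filter_getD_eq_count (l : List Bool) :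
    ((range l.length).filter fun k => l.getD k false = true).card = l.count true := by
  induction l with
  | nil => rfl
  | cons x l ih =>
    rw [card_filter] at ih ⊢
    rw [List.length_cons, sum_range_succ']
    simp only [List.getD_cons_succ, ih]
    cases x <;> simp

def supsFloor (P : List Bool) : ℕ :=
  ∑ i ∈ (range P.length).filter (fun i => P.getD i false = true), hB P i / 2

lemma getD_node_zero : (true :: a ++ false :: b).getD 0 false = true := rfl

lemma getD_node_length_succ : (true :: a ++ false :: b).getD (a.length + 1) false = false := by
  simp

lemma sups_node (ha : IsDyck a) (hb : IsDyck b) :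
    sups (true :: a ++ false :: b) = supsFloor a + a.count true + sups b := by
  set L := true :: a ++ false :: b
  have hmid : ∑ k ∈ range a.length,
      (if L.getD (k + 1) false = true then (hB L (k + 1) + 1) / 2 else 0) =
      ∑ k ∈ (range a.length).filter (fun k => a.getD k false = true), (hB a k / 2 + 1) := by
    rw [sum_filter]
    refine sum_congr rfl fun k hk => ?_
    have hk := (mem_range.1 hk).le
    rw [getD_node_succ hk, hB_node_succ ha hk]
    split_ifs <;> omega
  have htail : ∑ j ∈ range b.length,
      (if L.getD (a.length + 2 + j) false = true then (hB L (a.length + 2 + j) + 1) / 2 else 0) =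
      sups b := by
    rw [sups, sum_filter]
    refine sum_congr rfl fun j _ => ?_
    rw [getD_node_length_add_two_add, hB_node_length_add_two_add ha hb]
  rw [sups, sum_filter_range_node, hmid, htail, sum_add_distrib, ← card_eq_sum_ones,
    card_filter_getD_eq_count, getD_node_length_succ, supsFloor]
  simp [hB]

lemma supsFloor_node (ha : IsDyck a) (hb : IsDyck b) :
    supsFloor (true :: a ++ false :: b) = sups a + supsFloor b := by
  set L := true :: a ++ false :: b
  have hmid : ∑ k ∈ range a.length,
      (if L.getD (k + 1) false = true then hB L (k + 1) / 2 else 0) = sups a := by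
    rw [sups, sum_filter]
    refine sum_congr rfl fun k hk => ?_
    have hk := (mem_range.1 hk).le
    rw [getD_node_succ hk, hB_node_succ ha hk]
  have htail : ∑ j ∈ range b.length,
      (if L.getD (a.length + 2 + j) false = true then hB L (a.length + 2 + j) / 2 else 0) =
      supsFloor b := by
    rw [supsFloor, sum_filter]
    refine sum_congr rfl fun j _ => ?_
    rw [getD_node_length_add_two_add, hB_node_length_add_two_add ha hb]
  rw [supsFloor, sum_filter_range_node, hmid, htail, getD_node_length_succ]
  simp [hB]

lemma dr_node :
    dr (true :: a ++ false :: b) = dr a + dr b + if a.getD 0 false = true then 1 else 0 := by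
  set L := true :: a ++ false :: b
  have hmid : ∑ k ∈ range a.length,
      (if L.getD (k + 1) false = true ∧ L.getD (k + 1 + 1) false = true then 1 else 0) =
      dr a := by
    rw [dr, card_filter]
    refine sum_congr rfl fun k hk => ?_
    rw [getD_node_succ (mem_range.1 hk).le, getD_node_succ (mem_range.1 hk)]
  have htail : ∑ j ∈ range b.length,
      (if L.getD (a.length + 2 + j) false = true ∧ L.getD (a.length + 2 + j + 1) false = true
        then 1 else 0) = dr b := by
    rw [dr, card_filter]
    refine sum_congr rfl fun j _ => ?_
    rw [getD_node_length_add_two_add, add_assoc, getD_node_length_add_two_add]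
  rw [dr, card_eq_sum_ones, sum_filter_range_node, hmid, htail, getD_node_length_succ,
    getD_node_succ (Nat.zero_le _)]
  simp only [show L.getD 0 false = true from rfl, true_and, Bool.false_eq_true, false_and,
    if_false, add_zero]
  omega

lemma matchD_node_zero (ha : IsDyck a) : matchD (true :: a ++ false :: b) 0 = a.length + 1 := by
  refine IsLeast.csInf_eq ⟨⟨by omega, ?_⟩, fun k ⟨hk, hbal⟩ => ?_⟩
  · rw [show a.length + 1 + 1 = a.length + 2 + 0 from rfl, ups_node_length_add_two_add,
      downs_node_length_add_two_add, ups_zero, downs_zero, ups_zero, downs_zero, ha.1]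
    omega
  · by_contra! hlt
    have := ha.2 k
    rw [ups_node_succ (k := k) (by omega), downs_node_succ (k := k) (by omega),
      ups_zero, downs_zero] at hbal
    omega

lemma matchD_node_succ (ha : IsDyck a) (hi : a.getD i false = true) :
    matchD (true :: a ++ false :: b) (i + 1) = matchD a i + 1 := by
  obtain ⟨hja, hij, hbal⟩ := matchD_mem ha hi
  have hia : i ≤ a.length := by omega
  refine IsLeast.csInf_eq ⟨⟨by omega, ?_⟩, fun k ⟨hk, hbalk⟩ => ?_⟩
  · rw [ups_node_succ (k := matchD a i + 1) hja,
      downs_node_succ (k := matchD a i + 1) hja, ups_node_succ hia,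
      downs_node_succ hia]
    omega
  · by_contra! hlt
    rw [ups_node_succ (k := k) (by omega), downs_node_succ (k := k) (by omega),
      ups_node_succ hia, downs_node_succ hia] at hbalk
    have : matchD a i ≤ k - 1 :=
      Nat.sInf_le ⟨by omega, by rw [Nat.sub_add_cancel (by omega)]; omega⟩
    omega

lemma matchD_node_length_add_two_add (hb : IsDyck b) (hj : b.getD j false = true) :
    matchD (true :: a ++ false :: b) (a.length + 2 + j) = a.length + 2 + matchD b j := by
  obtain ⟨-, hij, hbal⟩ := matchD_mem hb hj
  refine IsLeast.csInf_eq ⟨⟨by omega, ?_⟩, fun k ⟨hk, hbalk⟩ => ?_⟩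
  · rw [show a.length + 2 + matchD b j + 1 = a.length + 2 + (matchD b j + 1) by omega,
      ups_node_length_add_two_add, downs_node_length_add_two_add, ups_node_length_add_two_add,
      downs_node_length_add_two_add]
    omega
  · by_contra! hlt
    rw [show k + 1 = a.length + 2 + (k - a.length - 2 + 1) by omega,
      ups_node_length_add_two_add, downs_node_length_add_two_add, ups_node_length_add_two_add,
      downs_node_length_add_two_add] at hbalk
    have : matchD b j ≤ k - a.length - 2 := Nat.sInf_le ⟨by omega, by omega⟩
    omega

lemma umass_node (ha : IsDyck a) (hb : IsDyck b) :
    Umass (true :: a ++ false :: b) = Umass a + Umass b +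
      if a.getD 0 false = true then (a.length - matchD a 0 - 1) / 2 else 0 := by
  set L := true :: a ++ false :: b
  have hmid : ∑ k ∈ range a.length,
      (if L.getD (k + 1) false = true ∧ L.getD (k + 1 + 1) false = true then
        (matchD L (k + 1) - matchD L (k + 1 + 1) - 1) / 2 else 0) = Umass a := by
    rw [Umass, sum_filter]
    refine sum_congr rfl fun k hk => ?_
    rw [getD_node_succ (mem_range.1 hk).le, getD_node_succ (k := k + 1) (mem_range.1 hk)]
    split_ifs with h
    · rw [matchD_node_succ ha h.1, matchD_node_succ (i := k + 1) ha h.2]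
      omega
    · rfl
  have htail : ∑ j ∈ range b.length,
      (if L.getD (a.length + 2 + j) false = true ∧ L.getD (a.length + 2 + j + 1) false = true
        then (matchD L (a.length + 2 + j) - matchD L (a.length + 2 + j + 1) - 1) / 2 else 0) =
      Umass b := by
    rw [Umass, sum_filter]
    refine sum_congr rfl fun j _ => ?_
    rw [getD_node_length_add_two_add, add_assoc, getD_node_length_add_two_add]
    split_ifs with h
    · rw [matchD_node_length_add_two_add hb h.1, matchD_node_length_add_two_add hb h.2]
      omega
    · rfl
  have hroot : (if L.getD 0 false = true ∧ L.getD (0 + 1) false = true then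
        (matchD L 0 - matchD L (0 + 1) - 1) / 2 else 0) =
      if a.getD 0 false = true then (a.length - matchD a 0 - 1) / 2 else 0 := by
    rw [getD_node_succ (Nat.zero_le _)]
    split_ifs with h h'
    · rw [matchD_node_zero ha, matchD_node_succ ha h', Nat.add_sub_add_right]
    · exact absurd h.2 h'
    · exact absurd ⟨rfl, ‹_›⟩ h
    · rfl
  rw [Umass, sum_filter_range_node, hroot, hmid, htail, getD_node_length_succ]
  simp only [Bool.false_eq_true, false_and, if_false, add_zero]
  omega

end DyckPath

def dyckStepEquivBool : DyckStep ≃ Bool where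
  toFun
    | .U => true
    | .D => false
  invFun b := if b then .U else .D
  left_inv s := by cases s <;> rfl
  right_inv b := by cases b <;> rfl

lemma isDyck_map_dyckStepEquivBool (p : DyckWord) : IsDyck (p.toList.map dyckStepEquivBool) := by
  have hcount (s : DyckStep) : (p.toList.map dyckStepEquivBool).count (dyckStepEquivBool s) =
      p.toList.count s := List.count_map_of_injective _ _ dyckStepEquivBool.injective s
  refine ⟨?_, fun k => ?_⟩
  · exact (hcount .U).trans (p.count_U_eq_count_D.trans (hcount .D).symm)
  · have hk (s : DyckStep) : ((p.toList.map dyckStepEquivBool).take k).count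
        (dyckStepEquivBool s) = (p.toList.take k).count s := by
      rw [← List.map_take]
      exact List.count_map_of_injective _ _ dyckStepEquivBool.injective s
    exact (hk .D).trans_le ((p.count_D_le_count_U k).trans_eq (hk .U).symm)

lemma exists_dyckWord_map_eq {P : List Bool} (hP : IsDyck P) :
    ∃ p : DyckWord, p.toList.map dyckStepEquivBool = P := by
  have hcount (b : Bool) (l : List Bool) : (l.map dyckStepEquivBool.symm).count
      (dyckStepEquivBool.symm b) = l.count b :=
    List.count_map_of_injective _ _ dyckStepEquivBool.symm.injective b
  refine ⟨⟨P.map dyckStepEquivBool.symm, ?_, fun k => ?_⟩, by simp [Function.comp_def]⟩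
  · exact (hcount true P).trans (hP.1.trans (hcount false P).symm)
  · rw [← List.map_take]
    exact (hcount false _).trans_le ((hP.2 k).trans_eq (hcount true _).symm)

open BinaryTree

def treePath : BinaryTree Unit → List Bool
  | nil => []
  | node _ l r => true :: treePath l ++ false :: treePath r

lemma treePath_eq_map_ofTree (t : BinaryTree Unit) :
    treePath t = (DyckWord.ofTree t).toList.map dyckStepEquivBool := by
  induction t with
  | nil => rfl
  | node u l r ihl ihr =>
    have : (DyckWord.ofTree (node u l r)).toList = [DyckStep.U] ++ (DyckWord.ofTree l).toList ++
        [DyckStep.D] ++ (DyckWord.ofTree r).toList := rfl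
    rw [treePath, ihl, ihr, this]
    simp [dyckStepEquivBool]

lemma isDyck_treePath (t : BinaryTree Unit) : IsDyck (treePath t) := by
  rw [treePath_eq_map_ofTree]
  exact isDyck_map_dyckStepEquivBool _

lemma length_treePath (t : BinaryTree Unit) : (treePath t).length = 2 * t.numNodes := by
  induction t with
  | nil => rfl
  | node _ l r ihl ihr =>
    simp only [treePath, List.length_append, List.length_cons, ihl, ihr, numNodes]
    ring

lemma treePath_injective : Function.Injective treePath := by
  intro s t hst
  rw [treePath_eq_map_ofTree, treePath_eq_map_ofTree] at hst
  exact DyckWord.equivTree.symm.injective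
    (DyckWord.ext (List.map_injective_iff.2 dyckStepEquivBool.injective hst))

lemma exists_treePath_eq {P : List Bool} (hP : IsDyck P) : ∃ t, treePath t = P := by
  obtain ⟨p, rfl⟩ := exists_dyckWord_map_eq hP
  exact ⟨p.toTree, by rw [treePath_eq_map_ofTree, DyckWord.ofTree_toTree]⟩

lemma finite_setOf_dyckN (n : ℕ) : {P | DyckN n P}.Finite :=
  (List.finite_length_eq Bool (2 * n)).subset fun _ hP => hP.2

lemma ncard_setOf_dyckN_eq_card_filter {s : List Bool → ℕ} {f : BinaryTree Unit → ℕ}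
    (hf : ∀ t, s (treePath t) = f t) (n k : ℕ) :
    {P | DyckN n P ∧ s P = k}.ncard = #((treesOfNumNodesEq n).filter (f · = k)) := by
  rw [← Set.ncard_coe_finset, ← Set.ncard_image_of_injective _ treePath_injective]
  congr 1
  ext P
  simp only [Set.mem_ofPred_eq, coe_filter, mem_treesOfNumNodesEq, Set.mem_image]
  constructor
  · rintro ⟨⟨hP, hlen⟩, rfl⟩
    obtain ⟨t, rfl⟩ := exists_treePath_eq hP
    exact ⟨t, ⟨by rw [length_treePath] at hlen; omega, (hf t).symm⟩, rfl⟩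
  · rintro ⟨t, ⟨rfl, rfl⟩, rfl⟩
    exact ⟨⟨isDyck_treePath t, length_treePath t⟩, hf t⟩

mutual
def treeSups : BinaryTree Unit → ℕ
  | nil => 0
  | node _ l r => treeSupsFloor l + l.numNodes + treeSups r
def treeSupsFloor : BinaryTree Unit → ℕ
  | nil => 0
  | node _ l r => treeSups l + treeSupsFloor r
end

-- `treeMassDrElev t = treeMassDr (node () t nil)`: `Umass + dr` of the elevated path `U t D`.
mutual
def treeMassDr : BinaryTree Unit → ℕ
  | nil => 0
  | node _ l r => treeMassDrElev l + treeMassDr r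
def treeMassDrElev : BinaryTree Unit → ℕ
  | nil => 0
  | node _ l r => treeMassDrElev l + treeMassDr r + r.numNodes + 1
end

lemma sups_treePath (t : BinaryTree Unit) :
    sups (treePath t) = treeSups t ∧ supsFloor (treePath t) = treeSupsFloor t := by
  induction t with
  | nil => exact ⟨rfl, rfl⟩
  | node _ l r ihl ihr =>
    have hcount : (treePath l).count true = l.numNodes := by
      have := (isDyck_treePath l).1
      have := List.count_true_add_count_false (treePath l)
      rw [length_treePath] at this
      omega
    rw [treePath, sups_node (isDyck_treePath l) (isDyck_treePath r),
      supsFloor_node (isDyck_treePath l) (isDyck_treePath r), hcount, ihl.1, ihl.2, ihr.1, ihr.2]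
    exact ⟨rfl, rfl⟩

lemma umass_add_dr_treePath (t : BinaryTree Unit) :
    Umass (treePath t) + dr (treePath t) = treeMassDr t := by
  induction t with
  | nil => rfl
  | node _ l r ihl ihr =>
    rw [treePath, umass_node (isDyck_treePath l) (isDyck_treePath r), dr_node, treeMassDr,
      ← ihr]
    cases l with
    | nil => simp [treePath, treeMassDrElev, Umass, dr]
    | node _ l₁ l₂ =>
      have hroot : ((true :: treePath l₁ ++ false :: treePath l₂).length -
          matchD (true :: treePath l₁ ++ false :: treePath l₂) 0 - 1) / 2 = l₂.numNodes := by
        rw [matchD_node_zero (isDyck_treePath l₁), List.length_append, List.length_cons,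
          List.length_cons, length_treePath, length_treePath]
        omega
      rw [treePath, treeMassDr] at ihl
      rw [treePath, if_pos getD_node_zero, if_pos getD_node_zero, hroot, treeMassDrElev, ← ihl]
      ring

open Polynomial

lemma sum_treesOfNumNodesEq_succ {M : Type*} [AddCommMonoid M] (F : BinaryTree Unit → M)
    (n : ℕ) :
    ∑ t ∈ treesOfNumNodesEq (n + 1), F t =
      ∑ ij ∈ antidiagonal n, ∑ l ∈ treesOfNumNodesEq ij.1, ∑ r ∈ treesOfNumNodesEq ij.2,
        F (node () l r) := by
  rw [treesOfNumNodesEq_succ, sum_biUnion]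
  · simp_rw [sum_map, sum_product]
    rfl
  · simp_rw [Set.PairwiseDisjoint, Set.Pairwise, Function.onFun, disjoint_left]
    aesop

noncomputable def treeGF (f : BinaryTree Unit → ℕ) (n : ℕ) : ℕ[X] :=
  ∑ t ∈ treesOfNumNodesEq n, X ^ f t

lemma coeff_treeGF (f : BinaryTree Unit → ℕ) (n k : ℕ) :
    (treeGF f n).coeff k = #((treesOfNumNodesEq n).filter (f · = k)) := by
  rw [treeGF, finsetSum_coeff, card_filter]
  exact sum_congr rfl fun t _ => by rw [coeff_X_pow]; exact if_congr eq_comm rfl rfl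

lemma treeGF_succ (f g h : BinaryTree Unit → ℕ) (c : ℕ → ℕ → ℕ)
    (hf : ∀ l r, f (node () l r) = g l + h r + c l.numNodes r.numNodes) (n : ℕ) :
    treeGF f (n + 1) =
      ∑ ij ∈ antidiagonal n, X ^ c ij.1 ij.2 * treeGF g ij.1 * treeGF h ij.2 := by
  rw [treeGF, sum_treesOfNumNodesEq_succ]
  refine sum_congr rfl fun ij _ => ?_
  rw [treeGF, treeGF, mul_assoc, sum_mul_sum, mul_sum]
  refine sum_congr rfl fun l hl => ?_
  rw [mul_sum]
  refine sum_congr rfl fun r hr => ?_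
  rw [hf, mem_treesOfNumNodesEq.1 hl, mem_treesOfNumNodesEq.1 hr, pow_add, pow_add]
  ring

theorem treeGF_treeMassDr_eq_treeGF_treeSups (n : ℕ) :
    treeGF treeMassDr n = treeGF treeSups n ∧
      treeGF treeMassDrElev n = X ^ n * treeGF treeSupsFloor n := by
  induction n using Nat.strong_induction_on with
  | _ n ih =>
  rcases n with _ | n
  · simp [treeGF, treeSups, treeSupsFloor, treeMassDr, treeMassDrElev]
  have hS := treeGF_succ treeSups treeSupsFloor treeSups (fun i _ => i)
    (fun _ _ => by rw [treeSups]; ring) n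
  have hG := treeGF_succ treeSupsFloor treeSups treeSupsFloor (fun _ _ => 0) (fun _ _ => rfl) n
  have hM := treeGF_succ treeMassDr treeMassDrElev treeMassDr (fun _ _ => 0) (fun _ _ => rfl) n
  have hN := treeGF_succ treeMassDrElev treeMassDrElev treeMassDr (fun _ j => j + 1)
    (fun _ _ => by rw [treeMassDrElev]; ring) n
  have hij : ∀ ij ∈ antidiagonal n, treeGF treeMassDrElev ij.1 * treeGF treeMassDr ij.2 =
      X ^ ij.1 * treeGF treeSupsFloor ij.1 * treeGF treeSups ij.2 := fun ij h => by
    have := mem_antidiagonal.1 h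
    rw [(ih ij.1 (by omega)).2, (ih ij.2 (by omega)).1]
  constructor
  · rw [hM, hS]
    exact sum_congr rfl fun ij h => by rw [pow_zero, one_mul, hij ij h]
  · rw [hN, hG, mul_sum]
    conv_rhs => rw [← Nat.sum_antidiagonal_swap]
    refine sum_congr rfl fun ij h => ?_
    have := mem_antidiagonal.1 h
    rw [mul_assoc, hij ij h, Prod.fst_swap, Prod.snd_swap,
      show n + 1 = ij.1 + (ij.2 + 1) by omega, pow_add]
    ring

/-- there is a bijection `Θ` on Dyck paths of semilength `n` with
`sups(P) = Umass(Θ P) + dr(Θ P)`; consequently `sups` and `Umass + dr` are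
equidistributed over `Dyck_n`. -/
theorem stmt10 (n : ℕ) :
    (∃ Θ : {P : List Bool // DyckN n P} ≃ {P : List Bool // DyckN n P},
        ∀ P : {P : List Bool // DyckN n P}, sups P.1 = Umass (Θ P).1 + dr (Θ P).1) ∧
    (∀ k : ℕ,
      Set.ncard {P : List Bool | DyckN n P ∧ sups P = k} =
      Set.ncard {P : List Bool | DyckN n P ∧ Umass P + dr P = k}) := by
  have hfiber (k : ℕ) : {P | DyckN n P ∧ sups P = k}.ncard =
      {P | DyckN n P ∧ Umass P + dr P = k}.ncard := by
    rw [ncard_setOf_dyckN_eq_card_filter (fun t => (sups_treePath t).1),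
      ncard_setOf_dyckN_eq_card_filter umass_add_dr_treePath, ← coeff_treeGF, ← coeff_treeGF,
      (treeGF_treeMassDr_eq_treeGF_treeSups n).1]
  exact ⟨exists_equiv_forall_eq_of_ncard_eq _ _ (finite_setOf_dyckN n) hfiber, hfiber⟩

end MahonianStats
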